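/- arXiv:1102.2283 — 8 statements merged into one kernel-verified Lean document; each statement's English description precedes it below -/
import Mathlib

section
/- Suppose a_{i,k} > a_{j,k} for all k = 1,...,n. Then along any solution of the mean-field system starting in the open simplex, the ratio u_i/u_j satisfies d/dt (u_i/u_j) >= Gamma (u_i/u_j) where Gamma = min_k (a_{i,k} - a_{j,k}) / max_m a_{m,k} > 0, and consequently u_j(t) <= (u_j(0)/u_i(0)) e^{-Gamma t} -> 0 as t -> infinity. -/
/-!
Write `r = u_i / u_j`. Each `u_m` grows at rate `F_m - 1`, where `F_m(u) = ∑_k a_{m,k} u_k / S_k`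
and `S_k = ∑_l a_{l,k} u_l ≤ max_m a_{m,k}`, so `r' = (F_i - F_j) r`. On the simplex
`F_i - F_j = ∑_k (a_{i,k} - a_{j,k}) u_k / S_k ≥ Γ ∑_k u_k = Γ`, hence `r' ≥ Γ r` and
`r(t) ≥ r(0) e^{Γ t}`. Since `u_i ≤ 1`, this gives `u_j(t) ≤ (u_j(0) / u_i(0)) e^{-Γ t}`.
-/

open Finset Filter Topology

theorem mul_exp_le_of_hasDerivAt_of_mul_le {f f' : ℝ → ℝ} {γ : ℝ}
    (hf : ∀ t, 0 ≤ t → HasDerivAt f (f' t) t) (hγ : ∀ t, 0 ≤ t → γ * f t ≤ f' t)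
    {t : ℝ} (ht : 0 ≤ t) : f 0 * Real.exp (γ * t) ≤ f t := by
  set g : ℝ → ℝ := fun s => f s * Real.exp (-γ * s)
  have hg : ∀ s, 0 ≤ s → HasDerivAt g ((f' s - γ * f s) * Real.exp (-γ * s)) s := by
    intro s hs
    refine ((hf s hs).mul ((hasDerivAt_id' s).const_mul (-γ)).exp).congr_deriv ?_
    ring
  have hmono : MonotoneOn g (Set.Ici 0) := by
    refine monotoneOn_of_deriv_nonneg (convex_Ici 0)
      (fun s hs => (hg s hs).continuousAt.continuousWithinAt) ?_ ?_
    · rw [interior_Ici]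
      exact fun s hs => (hg s hs.le).differentiableAt.differentiableWithinAt
    · rw [interior_Ici]
      intro s hs
      rw [(hg s hs.le).deriv]
      exact mul_nonneg (sub_nonneg.mpr (hγ s hs.le)) (Real.exp_pos _).le
  have h0t : g 0 ≤ g t := hmono Set.self_mem_Ici ht ht
  calc f 0 * Real.exp (γ * t) = g 0 * Real.exp (γ * t) := by simp [g]
    _ ≤ g t * Real.exp (γ * t) := by gcongr
    _ = f t := by
        simp only [g, mul_assoc, ← Real.exp_add, neg_mul, neg_add_cancel, Real.exp_zero, mul_one]

theorem HasDerivAt.div_of_hasDerivAt_mul_self {x y : ℝ → ℝ} {F G t : ℝ}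
    (hx : HasDerivAt x (F * x t) t) (hy : HasDerivAt y (G * y t) t) (hy0 : y t ≠ 0) :
    HasDerivAt (fun s => x s / y s) ((F - G) * (x t / y t)) t := by
  refine (hx.div hy hy0).congr_deriv ?_
  field_simp

section WeightedAverage

variable {ι : Type*} [Fintype ι] {w : ι → ℝ}

theorem sum_mul_le_sup'_of_sum_eq_one (hne : (univ : Finset ι).Nonempty) (f : ι → ℝ)
    (hw : ∀ l, 0 ≤ w l) (hw1 : ∑ l, w l = 1) : ∑ l, f l * w l ≤ univ.sup' hne f :=
  calc ∑ l, f l * w l ≤ ∑ l, univ.sup' hne f * w l :=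
        sum_le_sum fun l _ => mul_le_mul_of_nonneg_right (le_sup' f (mem_univ l)) (hw l)
    _ = univ.sup' hne f := by rw [← mul_sum, hw1, mul_one]

theorem sum_mul_pos_of_pos {f : ι → ℝ} (hf : ∀ l, 0 ≤ f l) {i : ι} (hfi : 0 < f i)
    (hw : ∀ l, 0 < w l) : 0 < ∑ l, f l * w l :=
  sum_pos' (fun l _ => mul_nonneg (hf l) (hw l).le) ⟨i, mem_univ i, mul_pos hfi (hw i)⟩

end WeightedAverage

section MeanField

variable {ι : Type*} [Fintype ι] {a : ι → ι → ℝ} {i j : ι} {w : ι → ℝ}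

/-- Along the mean-field system, `u_m` grows at rate `fitness a u m - 1`. -/
noncomputable def fitness (a : ι → ι → ℝ) (w : ι → ℝ) (m : ι) : ℝ :=
  ∑ k, a m k * w k / ∑ l, a l k * w l

noncomputable def dominanceRate (a : ι → ι → ℝ) (i j : ι) : ℝ :=
  univ.inf' ⟨i, mem_univ i⟩ fun k =>
    (a i k - a j k) / univ.sup' ⟨i, mem_univ i⟩ fun m => a m k

theorem sup'_col_pos (ha : ∀ m k, 0 ≤ a m k) (hdom : ∀ k, a j k < a i k) (k : ι) :
    0 < univ.sup' ⟨i, mem_univ i⟩ fun m => a m k :=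
  ((ha j k).trans_lt (hdom k)).trans_le (le_sup' (fun m => a m k) (mem_univ i))

theorem dominanceRate_pos (ha : ∀ m k, 0 ≤ a m k) (hdom : ∀ k, a j k < a i k) :
    0 < dominanceRate a i j :=
  (lt_inf'_iff _).2 fun k _ => div_pos (sub_pos.2 (hdom k)) (sup'_col_pos ha hdom k)

theorem dominanceRate_le_fitness_sub (ha : ∀ m k, 0 ≤ a m k) (hdom : ∀ k, a j k < a i k)
    (hw : ∀ m, 0 < w m) (hw1 : ∑ m, w m = 1) :
    dominanceRate a i j ≤ fitness a w i - fitness a w j := by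
  have hterm : ∀ k, dominanceRate a i j * w k ≤ (a i k - a j k) * w k / ∑ l, a l k * w l := by
    intro k
    calc dominanceRate a i j * w k
        ≤ (a i k - a j k) / (univ.sup' ⟨i, mem_univ i⟩ fun m => a m k) * w k :=
          mul_le_mul_of_nonneg_right (inf'_le _ (mem_univ k)) (hw k).le
      _ ≤ (a i k - a j k) * w k / ∑ l, a l k * w l := by
          rw [div_mul_eq_mul_div]
          exact div_le_div_of_nonneg_left
            (mul_nonneg (sub_pos.2 (hdom k)).le (hw k).le)
            (sum_mul_pos_of_pos (ha · k) ((ha j k).trans_lt (hdom k)) hw)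
            (sum_mul_le_sup'_of_sum_eq_one _ _ (fun l => (hw l).le) hw1)
  calc dominanceRate a i j = ∑ k, dominanceRate a i j * w k := by rw [← mul_sum, hw1, mul_one]
    _ ≤ ∑ k, (a i k - a j k) * w k / ∑ l, a l k * w l := sum_le_sum fun k _ => hterm k
    _ = fitness a w i - fitness a w j := by
        simp only [fitness, ← sum_sub_distrib, sub_mul, sub_div]

end MeanField

theorem ratio_growth_and_extinction_general
    (n : ℕ) (a : Fin n → Fin n → ℝ)
    (ha : ∀ m k, 0 ≤ a m k)
    (i j : Fin n)
    (hdom : ∀ k, a j k < a i k)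
    (u : ℝ → Fin n → ℝ)
    (hopen : ∀ t, 0 ≤ t → (∀ m, 0 < u t m) ∧ ∑ m, u t m = 1)
    (hsol : ∀ t, 0 ≤ t → ∀ m,
      HasDerivAt (fun s => u s m)
        (((∑ k, a m k * u t k / (∑ l, a l k * u t l)) - 1) * u t m) t) :
    0 < (Finset.univ.inf' ⟨i, Finset.mem_univ i⟩
          (fun k => (a i k - a j k) / Finset.univ.sup' ⟨i, Finset.mem_univ i⟩ (fun m => a m k))) ∧
    (∀ t, 0 ≤ t →
      deriv (fun s => u s i / u s j) t ≥
        (Finset.univ.inf' ⟨i, Finset.mem_univ i⟩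
          (fun k => (a i k - a j k) / Finset.univ.sup' ⟨i, Finset.mem_univ i⟩ (fun m => a m k)))
        * (u t i / u t j)) ∧
    (∀ t, 0 ≤ t →
      u t j ≤ (u 0 j / u 0 i) * Real.exp
        (-(Finset.univ.inf' ⟨i, Finset.mem_univ i⟩
          (fun k => (a i k - a j k) / Finset.univ.sup' ⟨i, Finset.mem_univ i⟩ (fun m => a m k))) * t)) ∧
    Filter.Tendsto (fun t => u t j) Filter.atTop (nhds 0) := by
  change 0 < dominanceRate a i j ∧ (∀ t, 0 ≤ t → _ ≥ dominanceRate a i j * _) ∧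
    (∀ t, 0 ≤ t → _ ≤ _ * Real.exp (-dominanceRate a i j * t)) ∧ _
  set Γ := dominanceRate a i j
  have hΓ : 0 < Γ := dominanceRate_pos ha hdom
  have hratio : ∀ t, 0 ≤ t → HasDerivAt (fun s => u s i / u s j)
      ((fitness a (u t) i - 1 - (fitness a (u t) j - 1)) * (u t i / u t j)) t := fun t ht =>
    (hsol t ht i).div_of_hasDerivAt_mul_self (hsol t ht j) ((hopen t ht).1 j).ne'
  have hgrowth : ∀ t, 0 ≤ t →
      Γ * (u t i / u t j) ≤
        (fitness a (u t) i - 1 - (fitness a (u t) j - 1)) * (u t i / u t j) :=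
    fun t ht => mul_le_mul_of_nonneg_right
      (by linarith [dominanceRate_le_fitness_sub ha hdom (hopen t ht).1 (hopen t ht).2])
      (div_pos ((hopen t ht).1 i) ((hopen t ht).1 j)).le
  have hdecay : ∀ t, 0 ≤ t → u t j ≤ u 0 j / u 0 i * Real.exp (-Γ * t) := by
    intro t ht
    have hr := mul_exp_le_of_hasDerivAt_of_mul_le hratio hgrowth ht
    have hi1 : u t i ≤ 1 := (hopen t ht).2 ▸
      single_le_sum (fun m _ => ((hopen t ht).1 m).le) (mem_univ i)
    obtain ⟨hu0, -⟩ := hopen 0 le_rfl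
    obtain ⟨hut, -⟩ := hopen t ht
    rw [neg_mul, Real.exp_neg, ← div_eq_mul_inv, div_div,
      le_div_iff₀ (mul_pos (hu0 i) (Real.exp_pos _))]
    rw [div_mul_eq_mul_div, div_le_div_iff₀ (hu0 j) (hut j)] at hr
    nlinarith [mul_le_mul_of_nonneg_right hi1 (hu0 j).le]
  refine ⟨hΓ, fun t ht => (hratio t ht).deriv ▸ hgrowth t ht, hdecay, ?_⟩
  have hlim : Tendsto (fun t => u 0 j / u 0 i * Real.exp (-Γ * t)) atTop (𝓝 0) := by
    simpa [neg_mul] using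
      (Real.tendsto_exp_neg_atTop_nhds_zero.comp (tendsto_id.const_mul_atTop hΓ)).const_mul
        (u 0 j / u 0 i)
  exact squeeze_zero' (eventually_atTop.2 ⟨0, fun t ht => ((hopen t ht).1 j).le⟩)
    (eventually_atTop.2 ⟨0, hdecay⟩) hlim

theorem ratio_growth_and_extinction
    (n : ℕ) (a : Fin n → Fin n → ℝ)
    (ha : ∀ m k, 0 ≤ a m k)
    (hcol : ∀ k, ∃ m, 0 < a m k)
    (i j : Fin n) (hij : i ≠ j)
    (hdom : ∀ k, a j k < a i k)
    (u : ℝ → Fin n → ℝ)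
    (hopen : ∀ t, 0 ≤ t → (∀ m, 0 < u t m) ∧ ∑ m, u t m = 1)
    (hsol : ∀ t, 0 ≤ t → ∀ m,
      HasDerivAt (fun s => u s m)
        (((∑ k, a m k * u t k / (∑ l, a l k * u t l)) - 1) * u t m) t) :
    0 < (Finset.univ.inf' ⟨i, Finset.mem_univ i⟩
          (fun k => (a i k - a j k) / Finset.univ.sup' ⟨i, Finset.mem_univ i⟩ (fun m => a m k))) ∧
    (∀ t, 0 ≤ t →
      deriv (fun s => u s i / u s j) t ≥
        (Finset.univ.inf' ⟨i, Finset.mem_univ i⟩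
          (fun k => (a i k - a j k) / Finset.univ.sup' ⟨i, Finset.mem_univ i⟩ (fun m => a m k)))
        * (u t i / u t j)) ∧
    (∀ t, 0 ≤ t →
      u t j ≤ (u 0 j / u 0 i) * Real.exp
        (-(Finset.univ.inf' ⟨i, Finset.mem_univ i⟩
          (fun k => (a i k - a j k) / Finset.univ.sup' ⟨i, Finset.mem_univ i⟩ (fun m => a m k))) * t)) ∧
    Filter.Tendsto (fun t => u t j) Filter.atTop (nhds 0) :=
  ratio_growth_and_extinction_general n a ha i j hdom u hopen hsol
end

section
/- For the two-type mean-field equation du_1/dt = h(u_1) with h(u) = (a_{1,2}/(a_{1,2} u + a_{2,2}(1-u)) - a_{2,1}/(a_{1,1} u + a_{2,1}(1-u))) u (1-u), the stationary points in [0,1] are exactly 0, 1, and (when it lies in (0,1)) u* = a_{2,1}(a_{1,2} - a_{2,2}) / (a_{1,2}(a_{2,1} - a_{1,1}) + a_{2,1}(a_{1,2} - a_{2,2})). -/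
noncomputable def twoTypeH (a11 a12 a21 a22 : ℝ) (u : ℝ) : ℝ :=
  (a12 / (a12 * u + a22 * (1 - u)) - a21 / (a11 * u + a21 * (1 - u))) * u * (1 - u)

theorem twoType_stationary_points
    (a11 a12 a21 a22 : ℝ)
    (h11 : 0 < a11) (h12 : 0 < a12) (h21 : 0 < a21) (h22 : 0 < a22)
    (hD : a12 * (a21 - a11) + a21 * (a12 - a22) ≠ 0) :
    ∀ u ∈ Set.Icc (0 : ℝ) 1,
      (twoTypeH a11 a12 a21 a22 u = 0 ↔
        u = 0 ∨ u = 1 ∨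
        u = a21 * (a12 - a22) / (a12 * (a21 - a11) + a21 * (a12 - a22))) := by
  intro u hu
  obtain ⟨hu0, hu1⟩ := hu
  have hd1 : 0 < a12 * u + a22 * (1 - u) := by
    rcases eq_or_lt_of_le hu0 with h | h
    · simp [← h]; linarith
    · nlinarith [mul_pos h12 h, mul_nonneg h22.le (by linarith : (0:ℝ) ≤ 1 - u)]
  have hd2 : 0 < a11 * u + a21 * (1 - u) := by
    rcases eq_or_lt_of_le hu0 with h | h
    · simp [← h]; linarith
    · nlinarith [mul_pos h11 h, mul_nonneg h21.le (by linarith : (0:ℝ) ≤ 1 - u)]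
  unfold twoTypeH
  constructor
  · intro h
    rcases mul_eq_zero.mp h with h' | h'
    · rcases mul_eq_zero.mp h' with h'' | h''
      · right; right
        have hsub : a12 / (a12 * u + a22 * (1 - u)) = a21 / (a11 * u + a21 * (1 - u)) := by
          linarith [sub_eq_zero.mp h'']
        have := div_eq_div_iff hd1.ne' hd2.ne' |>.mp hsub
        field_simp
        nlinarith
      · left; exact h''
    · right; left; linarith
  · rintro (rfl | rfl | rfl)
    · simp
    · simp
    · have key : a12 / (a12 * (a21 * (a12 - a22) / (a12 * (a21 - a11) + a21 * (a12 - a22))) + a22 * (1 - a21 * (a12 - a22) / (a12 * (a21 - a11) + a21 * (a12 - a22)))) - a21 / (a11 * (a21 * (a12 - a22) / (a12 * (a21 - a11) + a21 * (a12 - a22))) + a21 * (1 - a21 * (a12 - a22) / (a12 * (a21 - a11) + a21 * (a12 - a22)))) = 0 := by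
        rw [sub_eq_zero, div_eq_div_iff hd1.ne' hd2.ne']
        field_simp
        ring
      rw [key]; ring
end

section
/- For h as above and interior equilibrium u* = a_{2,1}(a_{1,2} - a_{2,2}) / D with D = a_{1,2}(a_{2,1} - a_{1,1}) + a_{2,1}(a_{1,2} - a_{2,2}) != 0, one has h'(u*) = (a_{2,1} - a_{1,1})(a_{1,2} - a_{2,2})[a_{1,2}(a_{1,1} - a_{2,1}) + a_{2,1}(a_{2,2} - a_{1,2})] / (a_{1,1} a_{2,2} - a_{1,2} a_{2,1})^2. -/
theorem HasDerivAt.fun_mul_of_left_eq_zero {𝕜 : Type*} [NontriviallyNormedField 𝕜]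
    {f k : 𝕜 → 𝕜} {f' k' x : 𝕜} (hf : HasDerivAt f f' x) (hk : HasDerivAt k k' x)
    (hfx : f x = 0) : HasDerivAt (fun y => f y * k y) (f' * k x) x := by
  simpa [hfx] using hf.fun_mul hk

theorem hasDerivAt_const_div_affine (a b c x : ℝ) (hx : a * x + b * (1 - x) ≠ 0) :
    HasDerivAt (fun u => c / (a * u + b * (1 - u)))
      (-(c * (a - b)) / (a * x + b * (1 - x)) ^ 2) x := by
  have hlin : HasDerivAt (fun u => a * u + b * (1 - u)) (a - b) x := by
    simpa [sub_eq_add_neg] using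
      ((hasDerivAt_id x).const_mul a).fun_add (((hasDerivAt_id x).const_sub 1).const_mul b)
  simpa using (hasDerivAt_const x c).fun_div hlin hx

theorem affine_eq_div_of_eq_div {a b u p D : ℝ} (hD : D ≠ 0) (hu : u = p / D) :
    a * u + b * (1 - u) = (a * p + b * (D - p)) / D := by
  subst hu; field_simp

noncomputable def twoTypeGap (a11 a12 a21 a22 u : ℝ) : ℝ :=
  a12 / (a12 * u + a22 * (1 - u)) - a21 / (a11 * u + a21 * (1 - u))

theorem twoTypeH_eq_gap_mul (a11 a12 a21 a22 : ℝ) :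
    twoTypeH a11 a12 a21 a22 = fun u => twoTypeGap a11 a12 a21 a22 u * (u * (1 - u)) := by
  funext u; simp only [twoTypeH, twoTypeGap]; ring

theorem hasDerivAt_twoTypeGap {a11 a12 a21 a22 u : ℝ} (h1 : a12 * u + a22 * (1 - u) ≠ 0)
    (h2 : a11 * u + a21 * (1 - u) ≠ 0) :
    HasDerivAt (twoTypeGap a11 a12 a21 a22)
      (-(a12 * (a12 - a22)) / (a12 * u + a22 * (1 - u)) ^ 2
        + a21 * (a11 - a21) / (a11 * u + a21 * (1 - u)) ^ 2) u :=
  ((hasDerivAt_const_div_affine a12 a22 a12 u h1).fun_sub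
    (hasDerivAt_const_div_affine a11 a21 a21 u h2)).congr_deriv (by ring)

theorem twoType_interior_derivative_general
    (a11 a12 a21 a22 : ℝ)
    (h12 : 0 < a12) (h21 : 0 < a21)
    (hdet : a11 * a22 ≠ a12 * a21)
    (hD : a12 * (a21 - a11) + a21 * (a12 - a22) ≠ 0) :
    HasDerivAt (twoTypeH a11 a12 a21 a22)
      ((a21 - a11) * (a12 - a22) * (a12 * (a11 - a21) + a21 * (a22 - a12)) /
        (a11 * a22 - a12 * a21) ^ 2)
      (a21 * (a12 - a22) / (a12 * (a21 - a11) + a21 * (a12 - a22))) := by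
  set D := a12 * (a21 - a11) + a21 * (a12 - a22)
  set u := a21 * (a12 - a22) / D with hu
  have hE : a12 * a21 - a11 * a22 ≠ 0 := sub_ne_zero.mpr hdet.symm
  have hL1 : a12 * u + a22 * (1 - u) = a12 * (a12 * a21 - a11 * a22) / D := by
    rw [affine_eq_div_of_eq_div hD hu]; ring
  have hL2 : a11 * u + a21 * (1 - u) = a21 * (a12 * a21 - a11 * a22) / D := by
    rw [affine_eq_div_of_eq_div hD hu]; ring
  have hL1ne : a12 * u + a22 * (1 - u) ≠ 0 := by rw [hL1]; positivity
  have hL2ne : a11 * u + a21 * (1 - u) ≠ 0 := by rw [hL2]; positivity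
  have hgap : twoTypeGap a11 a12 a21 a22 u = 0 := by
    rw [twoTypeGap, hL1, hL2]; field_simp; ring
  have hpoly : HasDerivAt (fun x : ℝ => x * (1 - x)) (1 - 2 * u) u := by
    simpa [sub_eq_add_neg, two_mul, add_assoc] using
      (hasDerivAt_id u).fun_mul ((hasDerivAt_id u).const_sub 1)
  rw [twoTypeH_eq_gap_mul]
  refine ((hasDerivAt_twoTypeGap hL1ne hL2ne).fun_mul_of_left_eq_zero hpoly hgap).congr_deriv ?_
  rw [hL1, hL2, hu]
  field_simp
  ring

theorem twoType_interior_derivative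
    (a11 a12 a21 a22 : ℝ)
    (h11 : 0 < a11) (h12 : 0 < a12) (h21 : 0 < a21) (h22 : 0 < a22)
    (hdet : a11 * a22 ≠ a12 * a21)
    (hD : a12 * (a21 - a11) + a21 * (a12 - a22) ≠ 0)
    (hstar : a21 * (a12 - a22) / (a12 * (a21 - a11) + a21 * (a12 - a22)) ∈ Set.Ioo (0 : ℝ) 1) :
    HasDerivAt (twoTypeH a11 a12 a21 a22)
      ((a21 - a11) * (a12 - a22) * (a12 * (a11 - a21) + a21 * (a22 - a12)) /
        (a11 * a22 - a12 * a21) ^ 2)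
      (a21 * (a12 - a22) / (a12 * (a21 - a11) + a21 * (a12 - a22))) :=
  twoType_interior_derivative_general a11 a12 a21 a22 h12 h21 hdet hD
end

section
/- In the two-type mean-field model with cooperation (a_{1,1} < a_{2,1} and a_{2,2} < a_{1,2}), the interior equilibrium u* is asymptotically stable for du/dt = h(u): h(u) > 0 for u in (0, u*) and h(u) < 0 for u in (u*, 1); consequently every solution with initial condition in (0,1) converges to u* as t -> infinity. -/
/-!
Clearing denominators, `h u = c u * (u* - u)` with `c u > 0` on `(0, 1)`, which gives the signs.
For the dynamics, `0`, `u*` and `1` are zeros of `h`, and `h` is Lipschitz on `[0, 1]`. By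
uniqueness for `y' = h y`, a solution cannot reach a zero of `h` in finite time, so it stays in
whichever of `(0, u*)`, `(u*, 1)` it starts in, or is constantly `u*`. There it is monotone and
bounded, and by the mean value theorem its limit is a zero of `h`, hence it is `u*`.
-/

open Set Filter Topology

def IsForwardSolution (f y : ℝ → ℝ) : Prop :=
  ∀ t, 0 ≤ t → HasDerivAt y (f (y t)) t

theorem exists_tendsto_atTop_of_monotoneOn_Ici {y : ℝ → ℝ} {b : ℝ}
    (hmono : MonotoneOn y (Ici 0)) (hb : ∀ t, 0 ≤ t → y t ≤ b) :
    ∃ L, Tendsto y atTop (𝓝 L) := by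
  set w : ℝ → ℝ := fun t => y (max t 0)
  have hw : Monotone w := fun s t hst =>
    hmono (le_max_right s 0) (le_max_right t 0) (max_le_max_right 0 hst)
  have hyw : w =ᶠ[atTop] y := by
    filter_upwards [eventually_ge_atTop 0] with t ht
    simp only [w, max_eq_left ht]
  refine ⟨_, (tendsto_atTop_ciSup hw ⟨b, ?_⟩).congr' hyw⟩
  rintro _ ⟨t, rfl⟩
  exact hb _ (le_max_right t 0)

theorem exists_first_exit_Ioo {y : ℝ → ℝ} {a b t₁ : ℝ} (ht₁ : 0 ≤ t₁)
    (hy : ContinuousOn y (Icc 0 t₁)) (h₀ : y 0 ∈ Ioo a b) (h₁ : y t₁ ∉ Ioo a b) :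
    ∃ T ∈ Icc 0 t₁, (y T = a ∨ y T = b) ∧ ∀ t ∈ Icc 0 T, y t ∈ Icc a b := by
  set S := Icc 0 t₁ ∩ y ⁻¹' (Ioo a b)ᶜ
  have hS : IsClosed S := hy.preimage_isClosed_of_isClosed isClosed_Icc isOpen_Ioo.isClosed_compl
  have hbdd : BddBelow S := ⟨0, fun t ht => ht.1.1⟩
  have hTS : sInf S ∈ S := hS.csInf_mem ⟨t₁, ⟨ht₁, le_rfl⟩, h₁⟩ hbdd
  set T := sInf S
  have hbefore : ∀ t ∈ Ico 0 T, y t ∈ Ioo a b := fun t ht => by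
    by_contra h
    exact (csInf_le hbdd ⟨⟨ht.1, ht.2.le.trans hTS.1.2⟩, h⟩).not_gt ht.2
  have hT : 0 < T := lt_of_le_of_ne hTS.1.1 fun h => hTS.2 (h ▸ h₀)
  have hyT : y T ∈ Icc a b := by
    have hcont : ContinuousWithinAt y (Ico 0 T) T :=
      (hy T hTS.1).mono (Ico_subset_Icc_self.trans (Icc_subset_Icc_right hTS.1.2))
    have := hcont.mem_closure_image (by rw [closure_Ico hT.ne]; exact right_mem_Icc.2 hT.le)
    rw [← closure_Ioo (h₀.1.trans h₀.2).ne]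
    exact closure_mono (MapsTo.image_subset hbefore) this
  refine ⟨T, hTS.1, ?_, fun t ht => ?_⟩
  · have : y T ∈ Icc a b \ Ioo a b := ⟨hyT, hTS.2⟩
    rwa [Icc_sdiff_Ioo_same (h₀.1.trans h₀.2).le, mem_insert_iff, mem_singleton_iff] at this
  · rcases ht.2.eq_or_lt with rfl | h
    · exact hyT
    · exact Ioo_subset_Icc_self (hbefore t ⟨ht.1, h⟩)

namespace IsForwardSolution

variable {f y : ℝ → ℝ}

theorem continuousOn (hy : IsForwardSolution f y) : ContinuousOn y (Ici 0) :=
  fun t ht => (hy t ht).continuousAt.continuousWithinAt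

theorem neg (hy : IsForwardSolution f y) : IsForwardSolution (fun v => -f (-v)) (-y) :=
  fun t ht => by simpa using (hy t ht).neg

variable {s : Set ℝ} {K : NNReal} {c : ℝ}

theorem apply_zero_eq_of_apply_eq (hy : IsForwardSolution f y) (hf : LipschitzOnWith K f s)
    (hc : f c = 0) (hcs : c ∈ s) {T : ℝ} (hT : 0 ≤ T) (hys : ∀ t ∈ Icc 0 T, y t ∈ s)
    (hyT : y T = c) : y 0 = c :=
  ODE_solution_unique_of_mem_Icc_left (v := fun _ => f) (g := fun _ => c) (fun _ _ => hf)
    (hy.continuousOn.mono Icc_subset_Ici_self) (fun t ht => (hy t ht.1.le).hasDerivWithinAt)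
    (fun t ht => hys t (Ioc_subset_Icc_self ht)) continuousOn_const
    (fun t _ => by simpa [hc] using hasDerivWithinAt_const t (Iic t) c) (fun _ _ => hcs) hyT
    ⟨le_rfl, hT⟩

theorem apply_eq_of_apply_zero_eq (hy : IsForwardSolution f y) (hf : LipschitzOnWith K f s)
    (hc : f c = 0) (hcs : c ∈ s) (hys : ∀ t, 0 ≤ t → y t ∈ s) (hy₀ : y 0 = c) :
    ∀ t, 0 ≤ t → y t = c := fun T hT =>
  ODE_solution_unique_of_mem_Icc_right (v := fun _ => f) (g := fun _ => c) (fun _ _ => hf)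
    (hy.continuousOn.mono Icc_subset_Ici_self) (fun t ht => (hy t ht.1).hasDerivWithinAt)
    (fun t ht => hys t ht.1) continuousOn_const
    (fun t _ => by simpa [hc] using hasDerivWithinAt_const t (Ici t) c) (fun _ _ => hcs) hy₀
    ⟨hT, le_rfl⟩

variable {a b L : ℝ}

theorem mapsTo_Ioo (hy : IsForwardSolution f y) (hf : LipschitzOnWith K f (Icc a b))
    (ha : f a = 0) (hb : f b = 0) (h₀ : y 0 ∈ Ioo a b) : ∀ t, 0 ≤ t → y t ∈ Ioo a b := by
  intro t₁ ht₁
  by_contra h₁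
  obtain ⟨T, hT, hyT, hys⟩ :=
    exists_first_exit_Ioo ht₁ (hy.continuousOn.mono Icc_subset_Ici_self) h₀ h₁
  have hab : a ≤ b := (h₀.1.trans h₀.2).le
  rcases hyT with hyT | hyT
  · have := hy.apply_zero_eq_of_apply_eq hf ha (left_mem_Icc.2 hab) hT.1 hys hyT
    exact (this ▸ h₀).1.false
  · have := hy.apply_zero_eq_of_apply_eq hf hb (right_mem_Icc.2 hab) hT.1 hys hyT
    exact (this ▸ h₀).2.false

theorem apply_eq_zero_of_tendsto (hy : IsForwardSolution f y) (hf : ContinuousWithinAt f s L)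
    (hys : ∀ t, 0 ≤ t → y t ∈ s) (hL : Tendsto y atTop (𝓝 L)) : f L = 0 := by
  -- mean value theorem on `[n, n + 1]`: the increments `y (n + 1) - y n → 0` are values of `f ∘ y`
  have hmvt : ∀ n : ℕ, ∃ ξ ∈ Ioo (n : ℝ) (n + 1), f (y ξ) = y (n + 1) - y n := fun n => by
    have hn : (0 : ℝ) ≤ n := n.cast_nonneg
    obtain ⟨ξ, hξ, h⟩ := exists_hasDerivAt_eq_slope y (fun t => f (y t)) (lt_add_one (n : ℝ))
      (hy.continuousOn.mono fun t ht => hn.trans ht.1)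
      (fun t ht => hy t (hn.trans ht.1.le))
    exact ⟨ξ, hξ, by simpa using h⟩
  choose ξ hξ hfξ using hmvt
  have hn : Tendsto (fun n : ℕ => (n : ℝ)) atTop atTop := tendsto_natCast_atTop_atTop
  have hξ_top : Tendsto ξ atTop atTop := tendsto_atTop_mono (fun n => (hξ n).1.le) hn
  have hfyξ : Tendsto (fun n => f (y (ξ n))) atTop (𝓝 (f L)) :=
    hf.tendsto.comp (tendsto_nhdsWithin_iff.2 ⟨hL.comp hξ_top,
      Eventually.of_forall fun n => hys _ ((n.cast_nonneg).trans (hξ n).1.le)⟩)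
  have hincr : Tendsto (fun n : ℕ => y (n + 1) - y n) atTop (𝓝 (L - L)) :=
    (hL.comp (tendsto_atTop_add_const_right _ 1 hn)).sub (hL.comp hn)
  rw [sub_self] at hincr
  exact tendsto_nhds_unique (hfyξ.congr hfξ) hincr

theorem tendsto_right_of_pos (hy : IsForwardSolution f y) (hf : LipschitzOnWith K f (Icc a b))
    (ha : f a = 0) (hb : f b = 0) (hpos : ∀ u ∈ Ioo a b, 0 < f u) (h₀ : y 0 ∈ Ioo a b) :
    Tendsto y atTop (𝓝 b) := by
  have hys := hy.mapsTo_Ioo hf ha hb h₀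
  have hmono : MonotoneOn y (Ici 0) :=
    monotoneOn_of_hasDerivWithinAt_nonneg (convex_Ici 0) hy.continuousOn
      (fun t ht => (hy t (interior_subset ht)).hasDerivWithinAt)
      (fun t ht => (hpos _ (hys t (interior_subset ht))).le)
  obtain ⟨L, hL⟩ := exists_tendsto_atTop_of_monotoneOn_Ici hmono fun t ht => (hys t ht).2.le
  have hLa : y 0 ≤ L := ge_of_tendsto hL <| (eventually_ge_atTop 0).mono fun t ht =>
    hmono self_mem_Ici ht ht
  have hLb : L ≤ b := le_of_tendsto hL <| (eventually_ge_atTop 0).mono fun t ht => (hys t ht).2.le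
  have hfL : f L = 0 :=
    hy.apply_eq_zero_of_tendsto (hf.continuousOn L ⟨(h₀.1.trans_le hLa).le, hLb⟩)
      (fun t ht => Ioo_subset_Icc_self (hys t ht)) hL
  obtain rfl | hLb := hLb.eq_or_lt
  · exact hL
  · exact absurd hfL (hpos L ⟨h₀.1.trans_le hLa, hLb⟩).ne'

theorem tendsto_left_of_neg (hy : IsForwardSolution f y) (hf : LipschitzOnWith K f (Icc a b))
    (ha : f a = 0) (hb : f b = 0) (hneg : ∀ u ∈ Ioo a b, f u < 0) (h₀ : y 0 ∈ Ioo a b) :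
    Tendsto y atTop (𝓝 a) := by
  have hf' : LipschitzOnWith K (fun v => -f (-v)) (Icc (-b) (-a)) := by
    intro u hu v hv
    simpa using hf (neg_mem_Icc_iff.2 hu) (neg_mem_Icc_iff.2 hv)
  have := hy.neg.tendsto_right_of_pos hf' (by simpa using hb) (by simpa using ha)
    (fun u hu => by simpa using hneg (-u) (neg_mem_Ioo_iff.2 hu))
    (neg_mem_Ioo_iff.2 (by simpa using h₀))
  simpa using this.neg

end IsForwardSolution

theorem mul_add_mul_one_sub_pos {a b u : ℝ} (ha : 0 < a) (hb : 0 < b)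
    (hu : u ∈ Icc (0 : ℝ) 1) : 0 < a * u + b * (1 - u) := by
  rcases hu.1.eq_or_lt with rfl | hu₀
  · simpa using hb
  · nlinarith [hu.2]

noncomputable def twoTypeEquilibrium (a11 a12 a21 a22 : ℝ) : ℝ :=
  a21 * (a12 - a22) / (a12 * (a21 - a11) + a21 * (a12 - a22))

section TwoType

variable {a11 a12 a21 a22 : ℝ}

theorem twoTypeEquilibrium_mem_Ioo (h12 : 0 < a12) (h21 : 0 < a21) (hcoop1 : a11 < a21)
    (hcoop2 : a22 < a12) : twoTypeEquilibrium a11 a12 a21 a22 ∈ Ioo (0 : ℝ) 1 := by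
  have h₁ : 0 < a12 * (a21 - a11) := mul_pos h12 (sub_pos.2 hcoop1)
  have h₂ : 0 < a21 * (a12 - a22) := mul_pos h21 (sub_pos.2 hcoop2)
  exact ⟨div_pos h₂ (by positivity), (div_lt_one (by positivity)).2 (by linarith)⟩

theorem exists_pos_twoTypeH_eq_mul (h11 : 0 < a11) (h12 : 0 < a12) (h21 : 0 < a21)
    (h22 : 0 < a22) (hcoop1 : a11 < a21) (hcoop2 : a22 < a12) {u : ℝ} (hu : u ∈ Ioo (0 : ℝ) 1) :
    ∃ c > 0, twoTypeH a11 a12 a21 a22 u = c * (twoTypeEquilibrium a11 a12 a21 a22 - u) := by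
  have hB := mul_add_mul_one_sub_pos h12 h22 (Ioo_subset_Icc_self hu)
  have hA := mul_add_mul_one_sub_pos h11 h21 (Ioo_subset_Icc_self hu)
  have hD : 0 < a12 * (a21 - a11) + a21 * (a12 - a22) := by
    nlinarith [mul_pos h12 (sub_pos.2 hcoop1), mul_pos h21 (sub_pos.2 hcoop2)]
  refine ⟨(a12 * (a21 - a11) + a21 * (a12 - a22)) * (u * (1 - u)) /
      ((a12 * u + a22 * (1 - u)) * (a11 * u + a21 * (1 - u))),
    div_pos (mul_pos hD (mul_pos hu.1 (sub_pos.2 hu.2))) (mul_pos hB hA), ?_⟩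
  have hnum : a12 * (a11 * u + a21 * (1 - u)) - (a12 * u + a22 * (1 - u)) * a21 =
      (a12 * (a21 - a11) + a21 * (a12 - a22)) * (twoTypeEquilibrium a11 a12 a21 a22 - u) := by
    rw [twoTypeEquilibrium, mul_sub _ (_ / _), mul_div_cancel₀ _ hD.ne']
    ring
  rw [twoTypeH, div_sub_div _ _ hB.ne' hA.ne', hnum]
  ring

theorem twoTypeH_pos (h11 : 0 < a11) (h12 : 0 < a12) (h21 : 0 < a21) (h22 : 0 < a22)
    (hcoop1 : a11 < a21) (hcoop2 : a22 < a12) {u : ℝ}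
    (hu : u ∈ Ioo 0 (twoTypeEquilibrium a11 a12 a21 a22)) : 0 < twoTypeH a11 a12 a21 a22 u := by
  have hu₁ := (twoTypeEquilibrium_mem_Ioo h12 h21 hcoop1 hcoop2).2
  obtain ⟨c, hc, h⟩ := exists_pos_twoTypeH_eq_mul h11 h12 h21 h22 hcoop1 hcoop2
    ⟨hu.1, hu.2.trans hu₁⟩
  exact h ▸ mul_pos hc (sub_pos.2 hu.2)

theorem twoTypeH_neg (h11 : 0 < a11) (h12 : 0 < a12) (h21 : 0 < a21) (h22 : 0 < a22)
    (hcoop1 : a11 < a21) (hcoop2 : a22 < a12) {u : ℝ}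
    (hu : u ∈ Ioo (twoTypeEquilibrium a11 a12 a21 a22) 1) : twoTypeH a11 a12 a21 a22 u < 0 := by
  have hu₀ := (twoTypeEquilibrium_mem_Ioo h12 h21 hcoop1 hcoop2).1
  obtain ⟨c, hc, h⟩ := exists_pos_twoTypeH_eq_mul h11 h12 h21 h22 hcoop1 hcoop2
    ⟨hu₀.trans hu.1, hu.2⟩
  exact h ▸ mul_neg_of_pos_of_neg hc (sub_neg.2 hu.1)

theorem twoTypeH_equilibrium (h11 : 0 < a11) (h12 : 0 < a12) (h21 : 0 < a21) (h22 : 0 < a22)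
    (hcoop1 : a11 < a21) (hcoop2 : a22 < a12) :
    twoTypeH a11 a12 a21 a22 (twoTypeEquilibrium a11 a12 a21 a22) = 0 := by
  obtain ⟨c, -, h⟩ := exists_pos_twoTypeH_eq_mul h11 h12 h21 h22 hcoop1 hcoop2
    (twoTypeEquilibrium_mem_Ioo h12 h21 hcoop1 hcoop2)
  rw [h, sub_self, mul_zero]

@[simp] theorem twoTypeH_zero : twoTypeH a11 a12 a21 a22 0 = 0 := by simp [twoTypeH]

@[simp] theorem twoTypeH_one : twoTypeH a11 a12 a21 a22 1 = 0 := by simp [twoTypeH]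

theorem exists_lipschitzOnWith_twoTypeH (h11 : 0 < a11) (h12 : 0 < a12) (h21 : 0 < a21)
    (h22 : 0 < a22) : ∃ K, LipschitzOnWith K (twoTypeH a11 a12 a21 a22) (Icc 0 1) := by
  refine ContDiffOn.exists_lipschitzOnWith (n := 1) ?_ one_ne_zero (convex_Icc 0 1) isCompact_Icc
  have hB := fun u (hu : u ∈ Icc (0 : ℝ) 1) => (mul_add_mul_one_sub_pos h12 h22 hu).ne'
  have hA := fun u (hu : u ∈ Icc (0 : ℝ) 1) => (mul_add_mul_one_sub_pos h11 h21 hu).ne'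
  unfold twoTypeH
  fun_prop (disch := assumption)

end TwoType

theorem cooperation_coexistence
    (a11 a12 a21 a22 : ℝ)
    (h11 : 0 < a11) (h12 : 0 < a12) (h21 : 0 < a21) (h22 : 0 < a22)
    (hcoop1 : a11 < a21) (hcoop2 : a22 < a12) :
    (∀ u ∈ Set.Ioo (0 : ℝ)
        (a21 * (a12 - a22) / (a12 * (a21 - a11) + a21 * (a12 - a22))),
      0 < twoTypeH a11 a12 a21 a22 u) ∧
    (∀ u ∈ Set.Ioo (a21 * (a12 - a22) / (a12 * (a21 - a11) + a21 * (a12 - a22))) (1 : ℝ),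
      twoTypeH a11 a12 a21 a22 u < 0) ∧
    (∀ y : ℝ → ℝ,
      (∀ t, 0 ≤ t → HasDerivAt y (twoTypeH a11 a12 a21 a22 (y t)) t) →
      y 0 ∈ Set.Ioo (0 : ℝ) 1 →
      Filter.Tendsto y Filter.atTop
        (nhds (a21 * (a12 - a22) / (a12 * (a21 - a11) + a21 * (a12 - a22))))) := by
  change (∀ u ∈ Ioo 0 (twoTypeEquilibrium a11 a12 a21 a22), _) ∧
    (∀ u ∈ Ioo (twoTypeEquilibrium a11 a12 a21 a22) 1, _) ∧
    ∀ y, IsForwardSolution _ y → _ → Tendsto y atTop (𝓝 (twoTypeEquilibrium a11 a12 a21 a22))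
  have hpos := fun u => twoTypeH_pos (u := u) h11 h12 h21 h22 hcoop1 hcoop2
  have hneg := fun u => twoTypeH_neg (u := u) h11 h12 h21 h22 hcoop1 hcoop2
  have hstar := twoTypeH_equilibrium h11 h12 h21 h22 hcoop1 hcoop2
  have hmem := twoTypeEquilibrium_mem_Ioo h12 h21 hcoop1 hcoop2
  obtain ⟨K, hK⟩ := exists_lipschitzOnWith_twoTypeH h11 h12 h21 h22
  refine ⟨hpos, hneg, fun y hy h₀ => ?_⟩
  rcases lt_trichotomy (y 0) (twoTypeEquilibrium a11 a12 a21 a22) with hlt | heq | hgt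
  · exact hy.tendsto_right_of_pos (hK.mono (Icc_subset_Icc_right hmem.2.le)) twoTypeH_zero hstar
      hpos ⟨h₀.1, hlt⟩
  · have hys t ht := Ioo_subset_Icc_self (hy.mapsTo_Ioo hK twoTypeH_zero twoTypeH_one h₀ t ht)
    refine tendsto_const_nhds.congr' ?_
    filter_upwards [eventually_ge_atTop 0] with t ht
    exact (hy.apply_eq_of_apply_zero_eq hK hstar (Ioo_subset_Icc_self hmem) hys heq t ht).symm
  · exact hy.tendsto_left_of_neg (hK.mono (Icc_subset_Icc_left hmem.1.le)) hstar twoTypeH_one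
      hneg ⟨hgt, h₀.2⟩
end

section
/- In the two-type mean-field model with competition (a_{1,1} > a_{2,1} and a_{2,2} > a_{1,2}), the system is bistable: h(u) < 0 for u in (0, u*) and h(u) > 0 for u in (u*, 1), so solutions of du/dt = h(u) converge to 0 when u(0) < u* and to 1 when u(0) > u*. -/
/-!
Write `h(u) = r(u) u (1 - u)` with `r(u) = a₁₂ / D₁(u) - a₂₁ / D₂(u)`. Over the positive
denominator `D₁ D₂`, the numerator of `r` is affine in `u` with negative slope and vanishes at
`u*`, so `r < 0` on `[0, u*)` and `r > 0` on `(u*, 1]`. Near `0` the equation reads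
`u' = u g(u)` with `g = r (1 - u) < 0`, and near `1` it reads `u' = (1 - u) g(u)` with
`g = r u > 0`.

For `y' = (y - a) g(y)` with `g < 0` on `(a, b)` and `y 0 ∈ (a, b)`, the solution stays in
`(a, y 0]`: it cannot rise above `y 0`, where the field is negative, and since `g` is bounded
below, `y - a` dominates a decaying exponential, so `a` is not reached in finite time. On every
`[c, y 0]` with `c > a` the field is bounded away from `0`, so the solution leaves it after a
finite time and, being antitone, never returns: `y → a`.
-/

open Set Filter Topology

section ScalarODE

variable {f y : ℝ → ℝ}

theorem le_initial_of_hasDerivAt_of_neg (hy : ∀ t, 0 ≤ t → HasDerivAt y (f (y t)) t)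
    (hf : f (y 0) < 0) {t : ℝ} (ht : 0 ≤ t) : y t ≤ y 0 :=
  image_le_of_deriv_right_lt_deriv_boundary (B := fun _ => y 0) (B' := fun _ => 0)
    (fun s hs => (hy s hs.1).continuousAt.continuousWithinAt)
    (fun s hs => (hy s hs.1).hasDerivWithinAt) le_rfl (fun _ => hasDerivAt_const _ _)
    (fun _ _ hs => hs ▸ hf) ⟨ht, le_rfl⟩

theorem add_mul_exp_le_of_hasDerivAt {a K : ℝ} (hy : ∀ t, 0 ≤ t → HasDerivAt y (f (y t)) t)
    (ha : a < y 0) (hK : 0 ≤ K) (hf : ∀ u ∈ Ioc a (y 0), -(K * (u - a)) < f u)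
    {t : ℝ} (ht : 0 ≤ t) : a + (y 0 - a) * Real.exp (-K * t) ≤ y t := by
  have hB : ∀ s, HasDerivAt (fun s => -(a + (y 0 - a) * Real.exp (-K * s)))
      (K * ((y 0 - a) * Real.exp (-K * s))) s := fun s => by
    have hlin : HasDerivAt (fun s => -K * s) (-K) s := by
      simpa using (hasDerivAt_id' s).const_mul (-K)
    exact ((hlin.exp.const_mul (y 0 - a)).const_add a).neg.congr_deriv (by ring)
  have := image_le_of_deriv_right_lt_deriv_boundary (f := fun s => -y s) (a := 0) (b := t)
    (fun s hs => (hy s hs.1).continuousAt.neg.continuousWithinAt)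
    (fun s hs => (hy s hs.1).neg.hasDerivWithinAt) (by simp) hB
    (fun s hs hys => by
      have hexp_pos := Real.exp_pos (-K * s)
      have hexp_le : Real.exp (-K * s) ≤ 1 :=
        Real.exp_le_one_iff.2 (by nlinarith [hs.1])
      have hys' : y s = a + (y 0 - a) * Real.exp (-K * s) := neg_inj.1 hys
      have hmem : y s ∈ Ioc a (y 0) := ⟨by nlinarith, by nlinarith⟩
      have := hf _ hmem
      rw [hys'] at this ⊢
      linarith) ⟨ht, le_rfl⟩
  linarith

theorem exists_lt_of_hasDerivAt_of_neg {c d : ℝ} (hf : ContinuousOn f (Icc c d))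
    (hneg : ∀ u ∈ Icc c d, f u < 0) (hy : ∀ t, 0 ≤ t → HasDerivAt y (f (y t)) t)
    (hyd : ∀ t, 0 ≤ t → y t ≤ d) : ∃ t, 0 ≤ t ∧ y t < c := by
  by_contra! hyc
  have hmem : ∀ t, 0 ≤ t → y t ∈ Icc c d := fun t ht => ⟨hyc t ht, hyd t ht⟩
  obtain ⟨m, hm_mem, hm⟩ := isCompact_Icc.exists_isMaxOn ⟨y 0, hmem 0 le_rfl⟩ hf
  have hfm := hneg m hm_mem
  have hdrift : ∀ t, 0 ≤ t → y t ≤ y 0 + f m * t := fun t ht =>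
    image_le_of_deriv_right_le_deriv_boundary (B := fun s => y 0 + f m * s) (B' := fun _ => f m)
      (fun s hs => (hy s hs.1).continuousAt.continuousWithinAt)
      (fun s hs => (hy s hs.1).hasDerivWithinAt) (by simp) (by fun_prop)
      (fun s _ => ((hasDerivAt_id' s).const_mul (f m)).const_add (y 0) |>.hasDerivWithinAt
        |>.congr_deriv (mul_one _))
      (fun s hs => hm (hmem s hs.1)) ⟨ht, le_rfl⟩
  have hcd : c ≤ d := hm_mem.1.trans hm_mem.2
  have hT : 0 ≤ (d - c + 1) / -f m := div_nonneg (by linarith) (by linarith)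
  have hfmT : -f m * ((d - c + 1) / -f m) = d - c + 1 := mul_div_cancel₀ _ (by linarith)
  linarith [hdrift _ hT, hyc _ hT, hyd 0 le_rfl]

theorem tendsto_of_hasDerivAt_of_mem_Ioc {a d : ℝ} (hf : ContinuousOn f (Ioc a d))
    (hneg : ∀ u ∈ Ioc a d, f u < 0) (hy : ∀ t, 0 ≤ t → HasDerivAt y (f (y t)) t)
    (hmem : ∀ t, 0 ≤ t → y t ∈ Ioc a d) : Tendsto y atTop (𝓝 a) := by
  have hanti : AntitoneOn y (Ici 0) :=
    antitoneOn_of_hasDerivWithinAt_nonpos (convex_Ici 0)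
      (fun t ht => (hy t ht).continuousAt.continuousWithinAt)
      (fun t ht => (hy t (interior_subset ht)).hasDerivWithinAt)
      (fun t ht => (hneg _ (hmem t (interior_subset ht))).le)
  refine tendsto_order.2
    ⟨fun _ ha' => eventually_atTop.2 ⟨0, fun t ht => ha'.trans (hmem t ht).1⟩,
      fun a' ha' => ?_⟩
  have had : a < d := (hmem 0 le_rfl).1.trans_le (hmem 0 le_rfl).2
  obtain ⟨T, hT, hyT⟩ := exists_lt_of_hasDerivAt_of_neg (c := min a' d)
    (hf.mono (Icc_subset_Ioc (lt_min ha' had) le_rfl))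
    (fun u hu => hneg u ⟨(lt_min ha' had).trans_le hu.1, hu.2⟩) hy (fun t ht => (hmem t ht).2)
  exact eventually_atTop.2 ⟨T, fun t ht =>
    (hanti hT (hT.trans ht) ht).trans_lt (hyT.trans_le (min_le_left _ _))⟩

variable {g : ℝ → ℝ} {a b : ℝ}

theorem mem_Ioc_of_hasDerivAt_sub_mul (hg : ContinuousOn g (Icc a b))
    (hneg : ∀ u ∈ Ioo a b, g u < 0)
    (hy : ∀ t, 0 ≤ t → HasDerivAt y ((y t - a) * g (y t)) t)
    (hy0 : y 0 ∈ Ioo a b) {t : ℝ} (ht : 0 ≤ t) : y t ∈ Ioc a (y 0) := by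
  obtain ⟨m, -, hm⟩ := isCompact_Icc.exists_isMinOn (nonempty_Icc.2 hy0.1.le)
    (hg.mono (Icc_subset_Icc_right hy0.2.le))
  -- The `+ 1` makes the barrier strict, as the fencing theorem behind the lower bound requires.
  have hlower := add_mul_exp_le_of_hasDerivAt (f := fun u => (u - a) * g u) hy hy0.1
    (K := |g m| + 1) (by positivity)
    (fun u hu => by
      have hgu : g m ≤ g u := hm ⟨hu.1.le, hu.2⟩
      nlinarith [neg_abs_le (g m), sub_pos.2 hu.1]) ht
  exact ⟨(lt_add_of_pos_right _ (mul_pos (sub_pos.2 hy0.1) (Real.exp_pos _))).trans_le hlower,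
    le_initial_of_hasDerivAt_of_neg (f := fun u => (u - a) * g u) hy
      (mul_neg_of_pos_of_neg (sub_pos.2 hy0.1) (hneg _ hy0)) ht⟩

theorem tendsto_of_hasDerivAt_sub_mul_of_neg (hg : ContinuousOn g (Icc a b))
    (hneg : ∀ u ∈ Ioo a b, g u < 0)
    (hy : ∀ t, 0 ≤ t → HasDerivAt y ((y t - a) * g (y t)) t)
    (hy0 : y 0 ∈ Ioo a b) : Tendsto y atTop (𝓝 a) :=
  tendsto_of_hasDerivAt_of_mem_Ioc (f := fun u => (u - a) * g u) (d := y 0)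
    ((continuousOn_id.sub continuousOn_const).mul
      (hg.mono (Ioc_subset_Icc_self.trans (Icc_subset_Icc_right hy0.2.le))))
    (fun u hu => mul_neg_of_pos_of_neg (sub_pos.2 hu.1) (hneg u ⟨hu.1, hu.2.trans_lt hy0.2⟩)) hy
    (fun _ ht => mem_Ioc_of_hasDerivAt_sub_mul hg hneg hy hy0 ht)

theorem tendsto_of_hasDerivAt_sub_mul_of_pos (hg : ContinuousOn g (Icc a b))
    (hpos : ∀ u ∈ Ioo a b, 0 < g u)
    (hy : ∀ t, 0 ≤ t → HasDerivAt y ((b - y t) * g (y t)) t)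
    (hy0 : y 0 ∈ Ioo a b) : Tendsto y atTop (𝓝 b) := by
  have := tendsto_of_hasDerivAt_sub_mul_of_neg (g := fun u => -g (-u)) (a := -b) (b := -a)
    (y := fun t => -y t)
    (hg.comp continuousOn_neg fun u hu => ⟨le_neg.1 hu.2, neg_le.1 hu.1⟩).neg
    (fun u hu => neg_neg_of_pos (hpos _ ⟨lt_neg.1 hu.2, neg_lt.1 hu.1⟩))
    (fun t ht => (hy t ht).neg.congr_deriv (by simp only [neg_neg]; ring))
    ⟨neg_lt_neg hy0.2, neg_lt_neg hy0.1⟩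
  simpa using this.neg

end ScalarODE

theorem mul_add_mul_one_sub_pos_s9 {p q u : ℝ} (hp : 0 < p) (hq : 0 < q)
    (hu : u ∈ Icc (0 : ℝ) 1) : 0 < p * u + q * (1 - u) := by
  nlinarith [mul_le_mul_of_nonneg_right (min_le_left p q) hu.1,
    mul_le_mul_of_nonneg_right (min_le_right p q) (sub_nonneg.2 hu.2), lt_min hp hq]

noncomputable def twoTypeRate (a11 a12 a21 a22 : ℝ) (u : ℝ) : ℝ :=
  a12 / (a12 * u + a22 * (1 - u)) - a21 / (a11 * u + a21 * (1 - u))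

noncomputable def twoTypeThreshold (a11 a12 a21 a22 : ℝ) : ℝ :=
  a21 * (a12 - a22) / (a12 * (a21 - a11) + a21 * (a12 - a22))

theorem twoTypeH_eq (a11 a12 a21 a22 u : ℝ) :
    twoTypeH a11 a12 a21 a22 u = twoTypeRate a11 a12 a21 a22 u * u * (1 - u) := rfl

section Competition

variable {a11 a12 a21 a22 : ℝ}

theorem twoTypeRate_continuousOn (h11 : 0 < a11) (h12 : 0 < a12) (h21 : 0 < a21)
    (h22 : 0 < a22) : ContinuousOn (twoTypeRate a11 a12 a21 a22) (Icc 0 1) :=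
  (continuousOn_const.div (by fun_prop) fun _ hu => (mul_add_mul_one_sub_pos_s9 h12 h22 hu).ne').sub
    (continuousOn_const.div (by fun_prop) fun _ hu => (mul_add_mul_one_sub_pos_s9 h11 h21 hu).ne')

theorem competition_denom_neg (h12 : 0 < a12) (h21 : 0 < a21) (hcomp1 : a21 < a11)
    (hcomp2 : a12 < a22) : a12 * (a21 - a11) + a21 * (a12 - a22) < 0 := by
  nlinarith

theorem twoTypeThreshold_mem_Ioo (h12 : 0 < a12) (h21 : 0 < a21) (hcomp1 : a21 < a11)
    (hcomp2 : a12 < a22) : twoTypeThreshold a11 a12 a21 a22 ∈ Ioo 0 1 := by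
  have hN := competition_denom_neg h12 h21 hcomp1 hcomp2
  exact ⟨div_pos_of_neg_of_neg (by nlinarith) hN, (div_lt_one_of_neg hN).2 (by nlinarith)⟩

theorem twoTypeRate_eq_div (h11 : 0 < a11) (h12 : 0 < a12) (h21 : 0 < a21) (h22 : 0 < a22)
    {u : ℝ} (hu : u ∈ Icc (0 : ℝ) 1) :
    twoTypeRate a11 a12 a21 a22 u =
      (a21 * (a12 - a22) - (a12 * (a21 - a11) + a21 * (a12 - a22)) * u) /
        ((a12 * u + a22 * (1 - u)) * (a11 * u + a21 * (1 - u))) := by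
  rw [twoTypeRate, div_sub_div _ _ (mul_add_mul_one_sub_pos_s9 h12 h22 hu).ne'
    (mul_add_mul_one_sub_pos_s9 h11 h21 hu).ne']
  ring

theorem twoTypeRate_neg (h11 : 0 < a11) (h12 : 0 < a12) (h21 : 0 < a21) (h22 : 0 < a22)
    (hcomp1 : a21 < a11) (hcomp2 : a12 < a22) :
    ∀ u ∈ Ico 0 (twoTypeThreshold a11 a12 a21 a22), twoTypeRate a11 a12 a21 a22 u < 0 := by
  intro u hu
  have hu' : u ∈ Icc (0 : ℝ) 1 :=
    ⟨hu.1, (hu.2.trans (twoTypeThreshold_mem_Ioo h12 h21 hcomp1 hcomp2).2).le⟩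
  have hnum := (lt_div_iff_of_neg (competition_denom_neg h12 h21 hcomp1 hcomp2)).1 hu.2
  rw [twoTypeRate_eq_div h11 h12 h21 h22 hu']
  exact div_neg_of_neg_of_pos (by linarith)
    (mul_pos (mul_add_mul_one_sub_pos_s9 h12 h22 hu') (mul_add_mul_one_sub_pos_s9 h11 h21 hu'))

theorem twoTypeRate_pos (h11 : 0 < a11) (h12 : 0 < a12) (h21 : 0 < a21) (h22 : 0 < a22)
    (hcomp1 : a21 < a11) (hcomp2 : a12 < a22) :
    ∀ u ∈ Ioc (twoTypeThreshold a11 a12 a21 a22) 1, 0 < twoTypeRate a11 a12 a21 a22 u := by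
  intro u hu
  have hu' : u ∈ Icc (0 : ℝ) 1 :=
    ⟨((twoTypeThreshold_mem_Ioo h12 h21 hcomp1 hcomp2).1.trans hu.1).le, hu.2⟩
  have hnum := (div_lt_iff_of_neg (competition_denom_neg h12 h21 hcomp1 hcomp2)).1 hu.1
  rw [twoTypeRate_eq_div h11 h12 h21 h22 hu']
  exact div_pos (by linarith)
    (mul_pos (mul_add_mul_one_sub_pos_s9 h12 h22 hu') (mul_add_mul_one_sub_pos_s9 h11 h21 hu'))

end Competition

theorem competition_bistability
    (a11 a12 a21 a22 : ℝ)
    (h11 : 0 < a11) (h12 : 0 < a12) (h21 : 0 < a21) (h22 : 0 < a22)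
    (hcomp1 : a21 < a11) (hcomp2 : a12 < a22) :
    (∀ u ∈ Set.Ioo (0 : ℝ)
        (a21 * (a12 - a22) / (a12 * (a21 - a11) + a21 * (a12 - a22))),
      twoTypeH a11 a12 a21 a22 u < 0) ∧
    (∀ u ∈ Set.Ioo (a21 * (a12 - a22) / (a12 * (a21 - a11) + a21 * (a12 - a22))) (1 : ℝ),
      0 < twoTypeH a11 a12 a21 a22 u) ∧
    (∀ y : ℝ → ℝ,
      (∀ t, 0 ≤ t → HasDerivAt y (twoTypeH a11 a12 a21 a22 (y t)) t) →
      y 0 ∈ Set.Ioo (0 : ℝ) 1 →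
      ((y 0 < a21 * (a12 - a22) / (a12 * (a21 - a11) + a21 * (a12 - a22)) →
          Filter.Tendsto y Filter.atTop (nhds 0)) ∧
       (a21 * (a12 - a22) / (a12 * (a21 - a11) + a21 * (a12 - a22)) < y 0 →
          Filter.Tendsto y Filter.atTop (nhds 1)))) := by
  have hthr := twoTypeThreshold_mem_Ioo h12 h21 hcomp1 hcomp2
  have hneg := twoTypeRate_neg h11 h12 h21 h22 hcomp1 hcomp2
  have hpos := twoTypeRate_pos h11 h12 h21 h22 hcomp1 hcomp2
  have hcont := twoTypeRate_continuousOn h11 h12 h21 h22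
  refine ⟨fun u hu => ?_, fun u hu => ?_, fun y hy hy0 => ⟨fun hlt => ?_, fun hgt => ?_⟩⟩
  · rw [twoTypeH_eq]
    exact mul_neg_of_neg_of_pos (mul_neg_of_neg_of_pos (hneg _ ⟨hu.1.le, hu.2⟩) hu.1)
      (sub_pos.2 (hu.2.trans hthr.2))
  · rw [twoTypeH_eq]
    exact mul_pos (mul_pos (hpos _ ⟨hu.1, hu.2.le⟩) (hthr.1.trans hu.1)) (sub_pos.2 hu.2)
  · refine tendsto_of_hasDerivAt_sub_mul_of_neg
      (g := fun u => twoTypeRate a11 a12 a21 a22 u * (1 - u))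
      ((hcont.mono (Icc_subset_Icc_right hthr.2.le)).mul (by fun_prop))
      (fun u hu => mul_neg_of_neg_of_pos (hneg _ ⟨hu.1.le, hu.2⟩)
        (sub_pos.2 (hu.2.trans hthr.2)))
      (fun t ht => (hy t ht).congr_deriv ?_) ⟨hy0.1, hlt⟩
    rw [twoTypeH_eq]; ring
  · refine tendsto_of_hasDerivAt_sub_mul_of_pos (g := fun u => twoTypeRate a11 a12 a21 a22 u * u)
      ((hcont.mono (Icc_subset_Icc_left hthr.1.le)).mul (by fun_prop))
      (fun u hu => mul_pos (hpos _ ⟨hu.1, hu.2.le⟩) (hthr.1.trans hu.1))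
      (fun t ht => (hy t ht).congr_deriv ?_) ⟨hgt, hy0.2⟩
    rw [twoTypeH_eq]; ring
end

section
/- At the nontrivial boundary equilibrium e_{1,2}, the vector (1,-1,0) is an eigenvector of the upper-left 2x2 Jacobian block with eigenvalue lambda_2 = (a_{2,1}(a_{1,1}-a_{2,1})/D_1^2 + a_{1,2}(a_{2,2}-a_{1,2})/D_2^2) u1* u2*, the trace of that block; this relies on the identity (a_{1,1}a_{2,1}/D_1^2 - a_{1,2}^2/D_2^2) u1* + (a_{2,1}^2/D_1^2 - a_{1,2}a_{2,2}/D_2^2) u2* = 0. -/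
lemma aux_vec (p q u1 u2 lam : ℝ) (hkey : p * u1 + q * u2 = 0)
    (hsum : u1 + u2 = 1) (hlam : lam = (p - q) * (u1 * u2)) :
    (!![p * u1 * u2, -p * u1 ^ 2; q * u2 ^ 2, -q * u1 * u2] : Matrix (Fin 2) (Fin 2) ℝ).mulVec
      ![1, -1] = lam • ![1, -1] := by
  funext i
  fin_cases i
  · simp [Matrix.mulVec, dotProduct, Fin.sum_univ_two, hlam]
    linear_combination u1 * hkey
  · simp [Matrix.mulVec, dotProduct, Fin.sum_univ_two, hlam]
    linear_combination u2 * hkey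

lemma aux_tr (p q u1 u2 lam : ℝ) (hlam : lam = (p - q) * (u1 * u2)) :
    lam = Matrix.trace
      (!![p * u1 * u2, -p * u1 ^ 2; q * u2 ^ 2, -q * u1 * u2] : Matrix (Fin 2) (Fin 2) ℝ) := by
  simp [Matrix.trace, Matrix.diag, Fin.sum_univ_two, hlam]
  ring

theorem eigenvector_at_e12
    (a11 a12 a21 a22 : ℝ)
    (h11 : 0 < a11) (h12 : 0 < a12) (h21 : 0 < a21) (h22 : 0 < a22)
    (u1 u2 : ℝ) (hu1 : u1 ∈ Set.Ioo (0 : ℝ) 1) (hu2 : u2 ∈ Set.Ioo (0 : ℝ) 1)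
    (hsum : u1 + u2 = 1)
    (hDrel : a21 * (a12 * u1 + a22 * u2) = a12 * (a11 * u1 + a21 * u2)) :
    let D1 := a11 * u1 + a21 * u2
    let D2 := a12 * u1 + a22 * u2
    let p := a11 * a21 / D1 ^ 2 - a12 ^ 2 / D2 ^ 2
    let q := a21 ^ 2 / D1 ^ 2 - a12 * a22 / D2 ^ 2
    let J2 : Matrix (Fin 2) (Fin 2) ℝ := !![p * u1 * u2, -p * u1 ^ 2; q * u2 ^ 2, -q * u1 * u2]
    let lam2 := (a21 * (a11 - a21) / D1 ^ 2 + a12 * (a22 - a12) / D2 ^ 2) * (u1 * u2)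
    (p * u1 + q * u2 = 0) ∧
    J2.mulVec ![1, -1] = lam2 • ![1, -1] ∧
    lam2 = Matrix.trace J2 := by
  obtain ⟨hu1p, hu1l⟩ := hu1
  obtain ⟨hu2p, hu2l⟩ := hu2
  intro D1 D2 p q J2 lam2
  have hD1 : D1 ≠ 0 := by positivity
  have hD2 : D2 ≠ 0 := by positivity
  have hDrel' : a21 * D2 = a12 * D1 := hDrel
  have hkey : p * u1 + q * u2 = 0 := by
    show (a11 * a21 / D1 ^ 2 - a12 ^ 2 / D2 ^ 2) * u1 +
      (a21 ^ 2 / D1 ^ 2 - a12 * a22 / D2 ^ 2) * u2 = 0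
    have hD1e : a11 * u1 + a21 * u2 = D1 := rfl
    have hD2e : a12 * u1 + a22 * u2 = D2 := rfl
    field_simp
    linear_combination (D1 * D2) * hDrel' + (a21 * D2 ^ 2) * hD1e - (a12 * D1 ^ 2) * hD2e
  have hlam : lam2 = (p - q) * (u1 * u2) := by
    show (a21 * (a11 - a21) / D1 ^ 2 + a12 * (a22 - a12) / D2 ^ 2) * (u1 * u2) =
      ((a11 * a21 / D1 ^ 2 - a12 ^ 2 / D2 ^ 2) -
        (a21 ^ 2 / D1 ^ 2 - a12 * a22 / D2 ^ 2)) * (u1 * u2)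
    field_simp
    ring
  exact ⟨hkey, aux_vec p q u1 u2 lam2 hkey hsum hlam, aux_tr p q u1 u2 lam2 hlam⟩
end

section
/- The sign of the transversal eigenvalue lambda_3 = a_{3,1} u1*/D_1 + a_{3,2} u2*/D_2 - 1 at e_{1,2} equals the sign of Delta_{1,2} [a_{1,2}(a_{2,1}-a_{1,1}) + a_{2,1}(a_{1,2}-a_{2,2})], where Delta_{1,2} = (2 a_{3,1} - a_{1,1} - a_{2,1})(a_{1,2} - a_{2,2}) + (2 a_{3,2} - a_{1,2} - a_{2,2})(a_{2,1} - a_{1,1}). -/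
/-!
Write `S` for the denominator of `u₁*` and `K = a₁₂ a₂₁ - a₁₁ a₂₂`. Then `u₂* = a₁₂ (a₂₁ - a₁₁) / S`,
and both payoffs at the equilibrium are multiples of `K / S`: `D₁ = a₂₁ K / S`, `D₂ = a₁₂ K / S`.
The weights `u_j* / D_j` therefore simplify to `(a₁₂ - a₂₂) / K` and `(a₂₁ - a₁₁) / K`, and since
`(a₁₁ + a₂₁)(a₁₂ - a₂₂) + (a₁₂ + a₂₂)(a₂₁ - a₁₁) = 2K` this gives `λ₃ = Δ₁₂ / (2K)`.
Finally `D₁ > 0` forces `K / S > 0`, so `λ₃` has the sign of `Δ₁₂ S`.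
-/

namespace Real

theorem sign_mul_of_pos (x : ℝ) {c : ℝ} (hc : 0 < c) : sign (x * c) = sign x := by
  rcases lt_trichotomy x 0 with hx | rfl | hx
  · rw [sign_of_neg hx, sign_of_neg (mul_neg_of_neg_of_pos hx hc)]
  · rw [zero_mul]
  · rw [sign_of_pos hx, sign_of_pos (mul_pos hx hc)]

theorem sign_div_eq_sign_mul_of_div_pos (x : ℝ) {k s : ℝ} (h : 0 < k / s) :
    sign (x / k) = sign (x * s) := by
  have hks : 0 < k * s := mul_pos_iff.mpr (div_pos_iff.mp h)
  have hk : k ≠ 0 := left_ne_zero_of_mul hks.ne'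
  calc sign (x / k) = sign (x / k * (k * s)) := (sign_mul_of_pos _ hks).symm
    _ = sign (x * s) := by field_simp

end Real

theorem transversal_eigenvalue_eq (a31 a32 : ℝ) {a11 a12 a21 a22 S K : ℝ} (hS : S ≠ 0)
    (ha12 : a12 ≠ 0) (ha21 : a21 ≠ 0) (hK : K = a12 * a21 - a11 * a22) (hK0 : K ≠ 0) :
    a31 * (a21 * (a12 - a22) / S) / (a21 * (K / S)) +
        a32 * (a12 * (a21 - a11) / S) / (a12 * (K / S)) - 1 =
      ((2 * a31 - a11 - a21) * (a12 - a22) + (2 * a32 - a12 - a22) * (a21 - a11)) / (2 * K) := by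
  field_simp
  rw [hK]
  ring

theorem sign_of_transversal_eigenvalue_general
    (a11 a12 a21 a22 a31 a32 : ℝ)
    (h11 : 0 < a11) (h21 : 0 < a21)
    (hu1 : a21 * (a12 - a22) / (a12 * (a21 - a11) + a21 * (a12 - a22)) ∈ Set.Ioo (0 : ℝ) 1) :
    let u1 := a21 * (a12 - a22) / (a12 * (a21 - a11) + a21 * (a12 - a22))
    let u2 := 1 - u1
    let D1 := a11 * u1 + a21 * u2
    let D2 := a12 * u1 + a22 * u2
    let lam3 := a31 * u1 / D1 + a32 * u2 / D2 - 1
    let Delta := (2 * a31 - a11 - a21) * (a12 - a22) + (2 * a32 - a12 - a22) * (a21 - a11)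
    Real.sign lam3 =
      Real.sign (Delta * (a12 * (a21 - a11) + a21 * (a12 - a22))) := by
  intro u1 u2 D1 D2 lam3 Delta
  obtain ⟨hu1_pos, hu1_lt⟩ := hu1
  set S := a12 * (a21 - a11) + a21 * (a12 - a22)
  set K := a12 * a21 - a11 * a22 with hK_def
  have hS : S ≠ 0 := fun h => by simp [h] at hu1_pos
  have hu2 : u2 = a12 * (a21 - a11) / S := by
    rw [show u2 = 1 - u1 from rfl, one_sub_div hS]
    ring
  have hu2_pos : 0 < u2 := sub_pos.mpr hu1_lt
  have ha12 : a12 ≠ 0 := fun h => by simp [hu2, h] at hu2_pos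
  have hD1 : D1 = a21 * (K / S) := by
    rw [show D1 = a11 * u1 + a21 * u2 from rfl, hu2]
    ring
  have hD2 : D2 = a12 * (K / S) := by
    rw [show D2 = a12 * u1 + a22 * u2 from rfl, hu2]
    ring
  have hD1_pos : 0 < D1 := add_pos (mul_pos h11 hu1_pos) (mul_pos h21 hu2_pos)
  have hKS : 0 < K / S := pos_of_mul_pos_right (hD1 ▸ hD1_pos) h21.le
  have hK : K ≠ 0 := by rintro hK; simp [hK] at hKS
  have hlam : lam3 = Delta / (2 * K) := by
    rw [show lam3 = a31 * u1 / D1 + a32 * u2 / D2 - 1 from rfl, hD1, hD2, hu2]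
    exact transversal_eigenvalue_eq a31 a32 hS ha12 h21.ne' hK_def hK
  rw [hlam]
  refine Real.sign_div_eq_sign_mul_of_div_pos Delta ?_
  rw [mul_div_assoc]
  exact mul_pos two_pos hKS

theorem sign_of_transversal_eigenvalue
    (a11 a12 a21 a22 a31 a32 : ℝ)
    (h11 : 0 < a11) (h12 : 0 < a12) (h21 : 0 < a21) (h22 : 0 < a22)
    (h31 : 0 < a31) (h32 : 0 < a32)
    (hD : a12 * (a21 - a11) + a21 * (a12 - a22) ≠ 0)
    (hu1 : a21 * (a12 - a22) / (a12 * (a21 - a11) + a21 * (a12 - a22)) ∈ Set.Ioo (0 : ℝ) 1) :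
    let u1 := a21 * (a12 - a22) / (a12 * (a21 - a11) + a21 * (a12 - a22))
    let u2 := 1 - u1
    let D1 := a11 * u1 + a21 * u2
    let D2 := a12 * u1 + a22 * u2
    let lam3 := a31 * u1 / D1 + a32 * u2 / D2 - 1
    let Delta := (2 * a31 - a11 - a21) * (a12 - a22) + (2 * a32 - a12 - a22) * (a21 - a11)
    Real.sign lam3 =
      Real.sign (Delta * (a12 * (a21 - a11) + a21 * (a12 - a22))) :=
  sign_of_transversal_eigenvalue_general a11 a12 a21 a22 a31 a32 h11 h21 hu1
end

section
/- Under the boundary conditions a_{2,1} < a_{1,1} < a_{3,1}, a_{1,2} < a_{2,2} < a_{3,2}, and a_{3,3} < min(a_{1,3}, a_{2,3}), the invadibility quantities satisfy Delta_{2,3} = 2(a_{2,3} - a_{3,3})(a_{1,2} - a_{2,2}) + 2(a_{3,2} - a_{2,2})(a_{1,3} - a_{2,3}), and Delta_{2,3} > 0 implies a_{1,3} > a_{2,3} while Delta_{3,1} > 0 implies a_{1,3} < a_{2,3}; hence Delta_{2,3} and Delta_{3,1} cannot both be positive. -/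
theorem delta23_delta31_not_both_positive
    (a11 a12 a13 a21 a22 a23 a31 a32 a33 : ℝ)
    (h11 : 0 < a11) (h12 : 0 < a12) (h13 : 0 < a13)
    (h21 : 0 < a21) (h22 : 0 < a22) (h23 : 0 < a23)
    (h31 : 0 < a31) (h32 : 0 < a32) (h33 : 0 < a33)
    (hb1 : a21 < a11) (hb2 : a11 < a31)
    (hb3 : a12 < a22) (hb4 : a22 < a32)
    (hb5 : a33 < a13) (hb6 : a33 < a23) :
    let Delta23 := (2 * a12 - a22 - a32) * (a23 - a33) + (2 * a13 - a23 - a33) * (a32 - a22)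
    let Delta31 := (2 * a23 - a33 - a13) * (a31 - a11) + (2 * a21 - a31 - a11) * (a13 - a33)
    (Delta23 = 2 * (a23 - a33) * (a12 - a22) + 2 * (a32 - a22) * (a13 - a23)) ∧
    (0 < Delta23 → a23 < a13) ∧
    (0 < Delta31 → a13 < a23) ∧
    ¬(0 < Delta23 ∧ 0 < Delta31) := by
  intro D23 D31
  have e1 : D23 = 2 * (a23 - a33) * (a12 - a22) + 2 * (a32 - a22) * (a13 - a23) := by
    simp only [D23]; ring
  have h2 : 0 < D23 → a23 < a13 := by
    intro h; rw [e1] at h; nlinarith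
  have h3 : 0 < D31 → a13 < a23 := by
    intro h; simp only [D31] at h; nlinarith
  exact ⟨e1, h2, h3, fun ⟨x, y⟩ => absurd (h2 x) (not_lt.2 (h3 y).le)⟩
end
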